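/- For every (x₁,x₂,x₃) ∈ 𝔛 one has (|x₁| − |x₂|)² ≤ 2·Re(x₁) + 2·Re(x₂) − 1 ≤ (|x₁| + |x₂|)², and both inequalities are strict if and only if Im(x₃) ≠ 0. Moreover, if Im(x₃) = 0 then the left inequality is an equality when x₃ > 0 and the right inequality is an equality when x₃ < 0. -/

import Mathlib

noncomputable section

open Complex

/-- Membership in Falbel's cross-ratio variety 𝔛. -/
def memX (x₁ x₂ x₃ : ℂ) : Prop :=
  x₁ ≠ 0 ∧ x₂ ≠ 0 ∧ x₃ ≠ 0 ∧
  ‖x₂‖ = ‖x₁‖ * ‖x₃‖ ∧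
  2 * ‖x₁‖ ^ 2 * x₃.re =
    ‖x₁‖ ^ 2 + ‖x₂‖ ^ 2 - 2 * x₁.re - 2 * x₂.re + 1

/-!
With `S = 2 Re x₁ + 2 Re x₂ - 1` and `2|x₁||x₂| = 2|x₁|²|x₃|`, the second defining equation
of 𝔛 says exactly that
`S - (|x₁| - |x₂|)² = 2|x₁|²(|x₃| - Re x₃)` and `(|x₁| + |x₂|)² - S = 2|x₁|²(|x₃| + Re x₃)`.
Both gaps are nonnegative since `|Re x₃| ≤ |x₃|`, both are positive iff `|Re x₃| < |x₃|`,
i.e. iff `Im x₃ ≠ 0`, and for real `x₃` one of them vanishes according to the sign of `x₃`.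
-/

theorem Complex.norm_sub_re_pos_and_norm_add_re_pos_iff (z : ℂ) :
    0 < ‖z‖ - z.re ∧ 0 < ‖z‖ + z.re ↔ z.im ≠ 0 := by
  rw [← abs_re_lt_norm, abs_lt]
  constructor <;> rintro ⟨h₁, h₂⟩ <;> constructor <;> linarith

section memX

variable {x₁ x₂ x₃ : ℂ}

theorem memX.sub_sub_sq_eq (hx : memX x₁ x₂ x₃) :
    2 * x₁.re + 2 * x₂.re - 1 - (‖x₁‖ - ‖x₂‖) ^ 2 = 2 * ‖x₁‖ ^ 2 * (‖x₃‖ - x₃.re) := by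
  obtain ⟨-, -, -, hnorm, hre⟩ := hx
  linear_combination (2 * ‖x₁‖) * hnorm + hre

theorem memX.add_sq_sub_eq (hx : memX x₁ x₂ x₃) :
    (‖x₁‖ + ‖x₂‖) ^ 2 - (2 * x₁.re + 2 * x₂.re - 1) = 2 * ‖x₁‖ ^ 2 * (‖x₃‖ + x₃.re) := by
  obtain ⟨-, -, -, hnorm, hre⟩ := hx
  linear_combination (2 * ‖x₁‖) * hnorm - hre

end memX

/-- On 𝔛 one has `(|x₁|−|x₂|)² ≤ 2·Re(x₁)+2·Re(x₂)−1 ≤ (|x₁|+|x₂|)²`, with both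
inequalities strict iff `Im(x₃) ≠ 0`; if `Im(x₃) = 0` then the left inequality
is an equality when `x₃ > 0` and the right one when `x₃ < 0`. -/
theorem ineq_X (x₁ x₂ x₃ : ℂ) (hx : memX x₁ x₂ x₃) :
    ((‖x₁‖ - ‖x₂‖) ^ 2 ≤ 2 * x₁.re + 2 * x₂.re - 1 ∧
     2 * x₁.re + 2 * x₂.re - 1 ≤ (‖x₁‖ + ‖x₂‖) ^ 2) ∧
    (((‖x₁‖ - ‖x₂‖) ^ 2 < 2 * x₁.re + 2 * x₂.re - 1 ∧
      2 * x₁.re + 2 * x₂.re - 1 < (‖x₁‖ + ‖x₂‖) ^ 2) ↔ x₃.im ≠ 0) ∧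
    (x₃.im = 0 →
      (0 < x₃.re → (‖x₁‖ - ‖x₂‖) ^ 2 = 2 * x₁.re + 2 * x₂.re - 1) ∧
      (x₃.re < 0 → 2 * x₁.re + 2 * x₂.re - 1 = (‖x₁‖ + ‖x₂‖) ^ 2)) := by
  have hx₁ : 0 < 2 * ‖x₁‖ ^ 2 := by have := hx.1; positivity
  have hre := abs_le.mp (abs_re_le_norm x₃)
  refine ⟨⟨sub_nonneg.mp ?_, sub_nonneg.mp ?_⟩, ?_, fun him ↦ ⟨fun hpos ↦ ?_, fun hneg ↦ ?_⟩⟩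
  · rw [hx.sub_sub_sq_eq]
    exact mul_nonneg hx₁.le (by linarith)
  · rw [hx.add_sq_sub_eq]
    exact mul_nonneg hx₁.le (by linarith)
  · rw [← sub_pos, ← sub_pos (a := (‖x₁‖ + ‖x₂‖) ^ 2), hx.sub_sub_sq_eq, hx.add_sq_sub_eq,
      mul_pos_iff_of_pos_left hx₁, mul_pos_iff_of_pos_left hx₁,
      norm_sub_re_pos_and_norm_add_re_pos_iff]
  · refine (sub_eq_zero.mp ?_).symm
    rw [hx.sub_sub_sq_eq, ← abs_re_eq_norm.mpr him, abs_of_pos hpos, sub_self, mul_zero]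
  · refine (sub_eq_zero.mp ?_).symm
    rw [hx.add_sq_sub_eq, ← abs_re_eq_norm.mpr him, abs_of_neg hneg, neg_add_cancel, mul_zero]
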